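/- arXiv:2503.14374 — 2 statements merged into one kernel-verified Lean document; each statement's English description precedes it below -/
import Mathlib

section
/- (Lemma 2, decomposition form.) Let X be a real n×p matrix (p > 0) whose columns each sum to zero (1ᵀX = 0), let K̂ = (1/p) X Xᵀ, and for τ² > 0 and 0 ≤ η < 1 let Σ = τ²(η K̂ + (1 − η) I). Then there exists a symmetric n×n real matrix M with M 1 = 0 (and hence 1ᵀ M = 0) such that Σ⁻¹ = M + (τ²(1 − η))⁻¹ I. -/
open Matrix

/-- Lemma 2 (decomposition form): for column-centered `X`, `K̂ = (1/p) X Xᵀ`,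
and `Σ = τ²(η K̂ + (1 − η) I)` with `τ² > 0` and `0 ≤ η < 1`, there is a
symmetric matrix `M` annihilating the all-ones vector (hence `1ᵀ M = 0` as well)
such that `Σ⁻¹ = M + (τ²(1 − η))⁻¹ I`. -/
theorem Sigma_inv_decomposition {n p : ℕ} (hp : 0 < p)
    (X : Matrix (Fin n) (Fin p) ℝ)
    (hX : Matrix.vecMul (fun _ => (1 : ℝ)) X = 0)
    (K : Matrix (Fin n) (Fin n) ℝ)
    (hK : K = ((p : ℝ)⁻¹) • (X * Xᵀ))
    (τ2 η : ℝ) (hτ : 0 < τ2) (hη0 : 0 ≤ η) (hη1 : η < 1)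
    (Sig : Matrix (Fin n) (Fin n) ℝ)
    (hSig : Sig = τ2 • (η • K + (1 - η) • (1 : Matrix (Fin n) (Fin n) ℝ))) :
    ∃ M : Matrix (Fin n) (Fin n) ℝ,
      M.IsSymm ∧
      Matrix.mulVec M (fun _ => (1 : ℝ)) = 0 ∧
      Matrix.vecMul (fun _ => (1 : ℝ)) M = 0 ∧
      Sig⁻¹ = M + (τ2 * (1 - η))⁻¹ • (1 : Matrix (Fin n) (Fin n) ℝ) := by
  set a : ℝ := τ2 * (1 - η) with ha
  have ha0 : 0 < a := mul_pos hτ (by linarith)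
  have hpR : (0 : ℝ) < p := by exact_mod_cast hp
  -- Sig as sum of a PSD matrix and a PD diagonal
  have hc : (0 : ℝ) ≤ τ2 * η / p := by positivity
  set c : ℝ := Real.sqrt (τ2 * η / p) with hcdef
  have hc2 : c ^ 2 = τ2 * η / p := Real.sq_sqrt hc
  have hSig' : Sig = (c • Xᵀ)ᴴ * (c • Xᵀ) + a • (1 : Matrix (Fin n) (Fin n) ℝ) := by
    subst hSig hK
    have hct : (c • Xᵀ)ᴴ = c • X := by
      ext i j
      simp [conjTranspose_apply]
    have hcc : c * c = τ2 * η * (p : ℝ)⁻¹ := by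
      rw [← pow_two, hc2]; ring
    rw [hct, Matrix.smul_mul, Matrix.mul_smul, smul_smul c c (X * Xᵀ), hcc, ha]
    module
  -- positive definiteness
  have hPD : Sig.PosDef := by
    rw [hSig']
    refine Matrix.PosDef.posSemidef_add (Matrix.posSemidef_conjTranspose_mul_self _) ?_
    have : a • (1 : Matrix (Fin n) (Fin n) ℝ) =
        Matrix.diagonal (fun _ => a) := by
      ext i j
      by_cases h : i = j <;> simp [Matrix.diagonal, Matrix.one_apply, h]
    rw [this]
    exact Matrix.PosDef.diagonal (fun _ => ha0)
  have hdet : IsUnit Sig.det := isUnit_iff_ne_zero.mpr (ne_of_gt hPD.det_pos)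
  -- symmetry of Sig and its inverse
  have hKsymm : Kᵀ = K := by
    rw [hK]
    simp [transpose_smul, Matrix.transpose_mul]
  have hSsymm : Sigᵀ = Sig := by
    rw [hSig]
    simp [transpose_smul, Matrix.transpose_add, hKsymm]
  have hSinvSymm : (Sig⁻¹)ᵀ = Sig⁻¹ := by
    rw [Matrix.transpose_nonsing_inv, hSsymm]
  -- Sig applied to ones
  have hXt1 : Xᵀ.mulVec (fun _ => (1 : ℝ)) = 0 := by
    rw [Matrix.mulVec_transpose, hX]
  have hK1 : K.mulVec (fun _ => (1 : ℝ)) = 0 := by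
    rw [hK, Matrix.smul_mulVec, ← Matrix.mulVec_mulVec, hXt1]
    simp
  have hS1 : Sig.mulVec (fun _ => (1 : ℝ)) = a • (fun _ => (1 : ℝ)) := by
    rw [hSig, Matrix.smul_mulVec, Matrix.add_mulVec,
      Matrix.smul_mulVec, Matrix.smul_mulVec, hK1, Matrix.one_mulVec]
    simp [ha, smul_smul]
  have hSinv1 : Sig⁻¹.mulVec (fun _ => (1 : ℝ)) = a⁻¹ • (fun _ => (1 : ℝ)) := by
    have h1 : Sig⁻¹.mulVec (Sig.mulVec (fun _ => (1 : ℝ))) = (fun _ => (1 : ℝ)) := by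
      rw [Matrix.mulVec_mulVec, Matrix.nonsing_inv_mul Sig hdet, Matrix.one_mulVec]
    rw [hS1, Matrix.mulVec_smul] at h1
    have := congrArg (fun v => a⁻¹ • v) h1
    simpa [smul_smul, inv_mul_cancel₀ (ne_of_gt ha0)] using this
  refine ⟨Sig⁻¹ - a⁻¹ • (1 : Matrix (Fin n) (Fin n) ℝ), ?_, ?_, ?_, ?_⟩
  · rw [Matrix.IsSymm]
    simp [Matrix.transpose_sub, hSinvSymm, transpose_smul]
  · rw [Matrix.sub_mulVec, hSinv1, Matrix.smul_mulVec, Matrix.one_mulVec]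
    simp
  · have hmv : (Sig⁻¹ - a⁻¹ • (1 : Matrix (Fin n) (Fin n) ℝ)).mulVec (fun _ => (1 : ℝ)) = 0 := by
      rw [Matrix.sub_mulVec, hSinv1, Matrix.smul_mulVec, Matrix.one_mulVec]
      simp
    have hsymm : (Sig⁻¹ - a⁻¹ • (1 : Matrix (Fin n) (Fin n) ℝ))ᵀ
        = Sig⁻¹ - a⁻¹ • (1 : Matrix (Fin n) (Fin n) ℝ) := by
      simp [Matrix.transpose_sub, hSinvSymm, transpose_smul]
    rw [← hsymm, Matrix.vecMul_transpose, hmv]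
  · abel
end

section
/- (Theorem 1, loss partition.) Let X be a real n×p matrix (n ≥ 1, p > 0) whose columns each sum to zero (1ᵀX = 0), let K̂ = (1/p) X Xᵀ, and for τ² > 0 and 0 ≤ η < 1 let Σ = τ²(η K̂ + (1 − η) I). For y ∈ ℝⁿ with mean ȳ and ẏ = y − ȳ 1, define the PLMM loss L(β₀, β) = (y − 1 β₀ − X β)ᵀ Σ⁻¹ (y − 1 β₀ − X β) for β₀ ∈ ℝ and β ∈ ℝᵖ. Then for all β₀ and β, L(β₀, β) = n (ȳ − β₀)² / (τ²(1 − η)) + (ẏ − X β)ᵀ Σ⁻¹ (ẏ − X β); that is, the loss separates into a term involving only β₀ and a term involving only β. -/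
open Matrix

/-!
Write `𝟙` for the all-ones vector and `c = τ²(1 − η)`. Since `1ᵀX = 0`, `K̂ 𝟙 = 0`, so `𝟙` is an
eigenvector of `Σ` with eigenvalue `c` and hence of the symmetric matrix `Σ⁻¹` with eigenvalue
`c⁻¹`. The residual splits as `(ẏ − Xβ) + (ȳ − β₀) 𝟙` with `ẏ − Xβ ⟂ 𝟙`, and a quadratic form
whose matrix has `𝟙` as an eigenvector has no cross term between `𝟙` and `𝟙ᗮ`.
-/

theorem Finset.sum_sub_sum_div_card_eq_zero {ι : Type*} [Fintype ι] (y : ι → ℝ) :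
    ∑ i, (y i - (∑ j, y j) / Fintype.card ι) = 0 := by
  rcases isEmpty_or_nonempty ι with _ | _
  · simp
  · rw [Finset.sum_sub_distrib, Finset.sum_const, Finset.card_univ, nsmul_eq_mul,
      mul_div_cancel₀ _ (by positivity), sub_self]

namespace Matrix

variable {ι : Type*}

theorem mul_transpose_mulVec_eq_zero_of_vecMul_eq_zero [Fintype ι] {κ R : Type*} [Fintype κ]
    [CommRing R] {X : Matrix ι κ R} {v : ι → R} (hv : v ᵥ* X = 0) : (X * Xᵀ) *ᵥ v = 0 := by
  rw [← mulVec_mulVec, mulVec_transpose, hv, mulVec_zero]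

theorem inv_mulVec_eq_inv_smul_of_mulVec_eq_smul [Fintype ι] [DecidableEq ι] {K : Type*} [Field K]
    {A : Matrix ι ι K} (hA : IsUnit A) {c : K} (hc : c ≠ 0) {v : ι → K} (hv : A *ᵥ v = c • v) :
    A⁻¹ *ᵥ v = c⁻¹ • v := by
  have := hA.invertible
  apply inv_mulVec_eq_vec
  rw [mulVec_smul, hv, smul_smul, inv_mul_cancel₀ hc, one_smul]

theorem dotProduct_mulVec_add_smul_of_isSymm [Fintype ι] {R : Type*} [CommRing R]
    {M : Matrix ι ι R} (hM : M.IsSymm) {u w : ι → R} {d : R} (hu : M *ᵥ u = d • u)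
    (hw : w ⬝ᵥ u = 0) (a : R) :
    (w + a • u) ⬝ᵥ M *ᵥ (w + a • u) = w ⬝ᵥ M *ᵥ w + a ^ 2 * d * (u ⬝ᵥ u) := by
  have hu' : u ᵥ* M = d • u := by rw [← mulVec_transpose, hM.eq, hu]
  have hw' : u ⬝ᵥ w = 0 := by rw [dotProduct_comm, hw]
  simp only [mulVec_add, mulVec_smul, add_dotProduct, dotProduct_add, smul_dotProduct,
    dotProduct_smul, dotProduct_mulVec u, hu', hu, hw, hw', smul_eq_mul]
  ring

theorem posDef_smul_smul_add_smul_one [DecidableEq ι] {K : Matrix ι ι ℝ} (hK : K.PosSemidef)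
    {τ η μ : ℝ} (hτ : 0 < τ) (hη : 0 ≤ η) (hμ : 0 < μ) : (τ • (η • K + μ • 1)).PosDef :=
  (PosDef.posSemidef_add (hK.smul hη) (PosDef.one.smul hμ)).smul hτ

end Matrix

theorem plmm_loss_partition_general {n p : ℕ}
    (X : Matrix (Fin n) (Fin p) ℝ)
    (hX : Matrix.vecMul (fun _ => (1 : ℝ)) X = 0)
    (K : Matrix (Fin n) (Fin n) ℝ)
    (hK : K = ((p : ℝ)⁻¹) • (X * Xᵀ))
    (τ2 η : ℝ) (hτ : 0 < τ2) (hη0 : 0 ≤ η) (hη1 : η < 1)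
    (Sig : Matrix (Fin n) (Fin n) ℝ)
    (hSig : Sig = τ2 • (η • K + (1 - η) • (1 : Matrix (Fin n) (Fin n) ℝ)))
    (y : Fin n → ℝ) (ybar : ℝ) (hybar : ybar = (∑ i, y i) / n)
    (ydot : Fin n → ℝ) (hydot : ydot = y - ybar • (fun _ => (1 : ℝ)))
    (L : ℝ → (Fin p → ℝ) → ℝ)
    (hL : ∀ (β₀ : ℝ) (β : Fin p → ℝ),
      L β₀ β = dotProduct
        (y - β₀ • (fun _ => (1 : ℝ)) - Matrix.mulVec X β)
        (Matrix.mulVec Sig⁻¹ (y - β₀ • (fun _ => (1 : ℝ)) - Matrix.mulVec X β))) :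
    ∀ (β₀ : ℝ) (β : Fin p → ℝ),
      L β₀ β = (n : ℝ) * (ybar - β₀) ^ 2 / (τ2 * (1 - η)) +
        dotProduct (ydot - Matrix.mulVec X β)
          (Matrix.mulVec Sig⁻¹ (ydot - Matrix.mulVec X β)) := by
  intro β₀ β
  set one : Fin n → ℝ := fun _ => 1
  have hc : τ2 * (1 - η) ≠ 0 := (mul_pos hτ (sub_pos.2 hη1)).ne'
  have hPD : Sig.PosDef := hSig ▸ posDef_smul_smul_add_smul_one
    (hK ▸ (posSemidef_self_mul_conjTranspose X).smul (by positivity)) hτ hη0 (by linarith)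
  have hSig_one : Sig *ᵥ one = (τ2 * (1 - η)) • one := by
    simp only [hSig, hK, smul_mulVec, add_mulVec, mul_transpose_mulVec_eq_zero_of_vecMul_eq_zero hX,
      one_mulVec, smul_zero, zero_add, smul_smul]
  have hSymm : Sig⁻¹.IsSymm := IsSymm.inv <| by
    simpa [IsSymm, conjTranspose_eq_transpose_of_trivial] using hPD.isHermitian.eq
  have hOrth : (ydot - X *ᵥ β) ⬝ᵥ one = 0 := by
    have hmean : ydot ⬝ᵥ one = 0 := by
      simpa [hydot, hybar, dotProduct, one] using Finset.sum_sub_sum_div_card_eq_zero y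
    rw [sub_dotProduct, hmean, dotProduct_comm, dotProduct_mulVec, hX, zero_dotProduct, sub_zero]
  have hres : y - β₀ • one - X *ᵥ β = (ydot - X *ᵥ β) + (ybar - β₀) • one := by
    rw [hydot, sub_smul]; abel
  rw [hL, hres, dotProduct_mulVec_add_smul_of_isSymm hSymm
    (inv_mulVec_eq_inv_smul_of_mulVec_eq_smul hPD.isUnit hc hSig_one) hOrth]
  have hone : one ⬝ᵥ one = n := by simp [one, dotProduct]
  rw [hone]
  ring

/-- Theorem 1 (loss partition): for column-centered `X`, `K̂ = (1/p) X Xᵀ`,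
`Σ = τ²(η K̂ + (1 − η) I)` with `τ² > 0`, `0 ≤ η < 1`, `y ∈ ℝⁿ` with mean `ȳ`
and `ẏ = y − ȳ 1`, the PLMM loss
`L(β₀, β) = (y − 1 β₀ − X β)ᵀ Σ⁻¹ (y − 1 β₀ − X β)` separates as
`L(β₀, β) = n (ȳ − β₀)² / (τ²(1 − η)) + (ẏ − X β)ᵀ Σ⁻¹ (ẏ − X β)`. -/
theorem plmm_loss_partition {n p : ℕ} (hn : 1 ≤ n) (hp : 0 < p)
    (X : Matrix (Fin n) (Fin p) ℝ)
    (hX : Matrix.vecMul (fun _ => (1 : ℝ)) X = 0)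
    (K : Matrix (Fin n) (Fin n) ℝ)
    (hK : K = ((p : ℝ)⁻¹) • (X * Xᵀ))
    (τ2 η : ℝ) (hτ : 0 < τ2) (hη0 : 0 ≤ η) (hη1 : η < 1)
    (Sig : Matrix (Fin n) (Fin n) ℝ)
    (hSig : Sig = τ2 • (η • K + (1 - η) • (1 : Matrix (Fin n) (Fin n) ℝ)))
    (y : Fin n → ℝ) (ybar : ℝ) (hybar : ybar = (∑ i, y i) / n)
    (ydot : Fin n → ℝ) (hydot : ydot = y - ybar • (fun _ => (1 : ℝ)))
    (L : ℝ → (Fin p → ℝ) → ℝ)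
    (hL : ∀ (β₀ : ℝ) (β : Fin p → ℝ),
      L β₀ β = dotProduct
        (y - β₀ • (fun _ => (1 : ℝ)) - Matrix.mulVec X β)
        (Matrix.mulVec Sig⁻¹ (y - β₀ • (fun _ => (1 : ℝ)) - Matrix.mulVec X β))) :
    ∀ (β₀ : ℝ) (β : Fin p → ℝ),
      L β₀ β = (n : ℝ) * (ybar - β₀) ^ 2 / (τ2 * (1 - η)) +
        dotProduct (ydot - Matrix.mulVec X β)
          (Matrix.mulVec Sig⁻¹ (ydot - Matrix.mulVec X β)) :=
  plmm_loss_partition_general X hX K hK τ2 η hτ hη0 hη1 Sig hSig y ybar hybar ydot hydot L hL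
end
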